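/- arXiv:2104.02966 — 2 statements merged into one kernel-verified Lean document; each statement's English description precedes it below -/
import Mathlib

section
/- Consider the linear filter Φ̇ = −αΦ + α A(t)ᵀA(t), Φ(0) = 0, with α > 0 and A : [0,∞) → ℝ^{3×3} bounded measurable. If ∫_{t₀}^{t₀+t_c} A(s)ᵀA(s) ds ⪰ δ I₃, then Φ(t₀ + t_c) ⪰ α δ e^{−α t_c} I₃; in particular det Φ(t₀+t_c) ≥ (αδ e^{−α t_c})³. -/
open Matrix MeasureTheory Set

attribute [local instance] Matrix.normedAddCommGroup Matrix.normedSpace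

noncomputable section

/-- Quadratic-form continuous linear map `M ↦ u ⬝ᵥ (M *ᵥ v)`. -/
def qCLM (u v : Fin 3 → ℝ) : Matrix (Fin 3) (Fin 3) ℝ →L[ℝ] ℝ :=
  LinearMap.toContinuousLinearMap
    { toFun := fun M => u ⬝ᵥ (M *ᵥ v)
      map_add' := fun M N => by simp [add_mulVec, dotProduct_add]
      map_smul' := fun c M => by simp [smul_mulVec, dotProduct_smul] }

@[simp] lemma qCLM_apply (u v : Fin 3 → ℝ) (M : Matrix (Fin 3) (Fin 3) ℝ) :
    qCLM u v M = u ⬝ᵥ (M *ᵥ v) := rfl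

/-- Entry-difference continuous linear map `M ↦ M i j - M j i`. -/
def dCLM (i j : Fin 3) : Matrix (Fin 3) (Fin 3) ℝ →L[ℝ] ℝ :=
  LinearMap.toContinuousLinearMap
    { toFun := fun M => M i j - M j i
      map_add' := fun M N => by simp; ring
      map_smul' := fun c M => by simp; ring }

@[simp] lemma dCLM_apply (i j : Fin 3) (M : Matrix (Fin 3) (Fin 3) ℝ) :
    dCLM i j M = M i j - M j i := rfl

lemma deriv_aux (α : ℝ) (A Φ : ℝ → Matrix (Fin 3) (Fin 3) ℝ)
    (hdΦ : ∀ t ≥ (0:ℝ), HasDerivWithinAt Φ ((-α) • Φ t + α • ((A t)ᵀ * A t)) (Ici 0) t)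
    (L : Matrix (Fin 3) (Fin 3) ℝ →L[ℝ] ℝ) (t : ℝ) (ht : t ∈ Ici (0:ℝ)) :
    HasDerivWithinAt (fun s => Real.exp (α * s) * L (Φ s))
      (α * Real.exp (α * t) * L ((A t)ᵀ * A t)) (Ici 0) t := by
  have h1 : HasDerivWithinAt (fun s => L (Φ s))
      (L ((-α) • Φ t + α • ((A t)ᵀ * A t))) (Ici 0) t :=
    L.hasFDerivAt.comp_hasDerivWithinAt t (hdΦ t ht)
  have h2 : HasDerivAt (fun s => Real.exp (α * s)) (Real.exp (α * t) * α) t := by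
    simpa using ((hasDerivAt_id t).const_mul α).exp
  have h3 : HasDerivWithinAt (fun s => Real.exp (α * s) * L (Φ s)) _ _ _ :=
    h2.hasDerivWithinAt.mul h1
  convert h3 using 1
  simp only [map_add, ContinuousLinearMap.map_smul, smul_eq_mul]
  ring

lemma det_ge_of_sub_smul_posSemidef {S : Matrix (Fin 3) (Fin 3) ℝ} {c : ℝ} (hc : 0 < c)
    (h : (S - c • 1).PosSemidef) : c ^ 3 ≤ S.det := by
  have hS : S.IsHermitian := by
    have h1 := h.1
    have h2 : ((c:ℝ) • (1 : Matrix (Fin 3) (Fin 3) ℝ)).IsHermitian := by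
      simp [Matrix.IsHermitian]
    simpa using h1.add h2
  have hev : ∀ i, c ≤ hS.eigenvalues i := by
    intro i
    have hpsd := h.dotProduct_mulVec_nonneg (⇑(hS.eigenvectorBasis i))
    have hvv : dotProduct (star ⇑(hS.eigenvectorBasis i)) ⇑(hS.eigenvectorBasis i) = 1 := by
      have hn := hS.eigenvectorBasis.orthonormal.1 i
      have h1 : (inner ℝ (hS.eigenvectorBasis i) (hS.eigenvectorBasis i) : ℝ) = 1 := by
        rw [real_inner_self_eq_norm_sq, hn]; norm_num
      rw [← h1, EuclideanSpace.inner_eq_star_dotProduct, dotProduct_comm]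
    have hmul := hS.mulVec_eigenvectorBasis i
    rw [sub_mulVec, dotProduct_sub, hmul, smul_mulVec, one_mulVec, dotProduct_smul,
      dotProduct_smul, hvv, sub_nonneg] at hpsd
    simpa [hvv, smul_eq_mul] using hpsd
  have hdet := hS.det_eq_prod_eigenvalues
  rw [hdet]
  have h3 : (c:ℝ)^3 = ∏ _i : Fin 3, c := by simp [pow_succ]
  rw [h3]
  exact Finset.prod_le_prod (fun i _ => hc.le) (fun i _ => hev i)

theorem stmt7
    (α : ℝ) (hα : 0 < α)
    (A : ℝ → Matrix (Fin 3) (Fin 3) ℝ)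
    (hmeas : ∀ i j, Measurable fun t => A t i j)
    (hbdd : ∃ M : ℝ, ∀ t ≥ (0:ℝ), ‖A t‖ ≤ M)
    (Φ : ℝ → Matrix (Fin 3) (Fin 3) ℝ) (hΦ0 : Φ 0 = 0)
    (hdΦ : ∀ t ≥ (0:ℝ),
      HasDerivWithinAt Φ ((-α) • Φ t + α • ((A t)ᵀ * A t)) (Ici 0) t)
    (t₀ t_c δ : ℝ) (ht₀ : 0 ≤ t₀) (htc : 0 < t_c) (hδ : 0 < δ)
    (hIE : ((∫ s in t₀..(t₀ + t_c), (A s)ᵀ * A s) - δ • 1).PosSemidef) :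
    (Φ (t₀ + t_c) - (α * δ * Real.exp (-α * t_c)) • 1).PosSemidef ∧
    (α * δ * Real.exp (-α * t_c)) ^ 3 ≤ (Φ (t₀ + t_c)).det := by
  obtain ⟨M, hM⟩ := hbdd
  set T := t₀ + t_c with hT
  set c := α * δ * Real.exp (-α * t_c) with hc
  have hc0 : 0 < c := by rw [hc]; positivity
  have ht₀T : t₀ ≤ T := by rw [hT]; linarith
  have hT0 : (0:ℝ) ≤ T := by rw [hT]; linarith
  have hIcc : Icc t₀ T ⊆ Ici (0:ℝ) := fun y hy => le_trans ht₀ hy.1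
  have hMnn : (0:ℝ) ≤ M := le_trans (norm_nonneg _) (hM 0 le_rfl)
  have hent : ∀ s, 0 ≤ s → ∀ i j, |A s i j| ≤ M := by
    intro s hs i j
    calc |A s i j| = ‖A s i j‖ := (Real.norm_eq_abs _).symm
      _ ≤ ‖A s‖ := norm_entry_le_entrywise_sup_norm (A s)
      _ ≤ M := hM s hs
  have hAA : ∀ s, 0 ≤ s → ∀ i j, |((A s)ᵀ * A s) i j| ≤ 3 * (M * M) := by
    intro s hs i j
    rw [mul_apply]
    calc |∑ k, (A s)ᵀ i k * A s k j| ≤ ∑ k, |(A s)ᵀ i k * A s k j| :=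
          Finset.abs_sum_le_sum_abs _ _
      _ ≤ ∑ _k : Fin 3, M * M := by
          refine Finset.sum_le_sum fun k _ => ?_
          rw [abs_mul, transpose_apply]
          exact mul_le_mul (hent s hs k i) (hent s hs k j) (abs_nonneg _) hMnn
      _ = 3 * (M * M) := by simp [Finset.sum_const]
  have hAAmeas : ∀ i j, Measurable fun s => ((A s)ᵀ * A s) i j := by
    intro i j
    simp only [mul_apply, transpose_apply]
    exact Finset.measurable_sum _ fun k _ => (hmeas k i).mul (hmeas k j)
  have hIntEntry : ∀ i j, IntegrableOn (fun s => ((A s)ᵀ * A s) i j) (Icc t₀ T) := by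
    intro i j
    refine Integrable.mono' (integrable_const (3 * (M * M)))
      ((hAAmeas i j).aestronglyMeasurable) ?_
    filter_upwards [ae_restrict_mem measurableSet_Icc] with s hs
    rw [Real.norm_eq_abs]
    exact hAA s (hIcc hs) i j
  have hIntM : @IntervalIntegrable _ _ NormedAddCommGroup.toENormedAddCommMonoid.toENormedAddMonoid (fun s => (A s)ᵀ * A s) volume t₀ T := by
    rw [intervalIntegrable_iff_integrableOn_Icc_of_le ht₀T enorm_ne_top]
    have heq : (fun s => (A s)ᵀ * A s) =
        fun s => ∑ i : Fin 3, ∑ j : Fin 3,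
          (((A s)ᵀ * A s) i j) • Matrix.single i j (1:ℝ) := by
      funext s
      conv_lhs => rw [matrix_eq_sum_single ((A s)ᵀ * A s)]
      simp [smul_single, smul_eq_mul]
    rw [heq]
    exact integrable_finset_sum _ fun i _ => integrable_finset_sum _ fun j _ =>
      (hIntEntry i j).smul_const _
  have hLgen : ∀ L : Matrix (Fin 3) (Fin 3) ℝ →L[ℝ] ℝ,
      IntervalIntegrable (fun s => L ((A s)ᵀ * A s)) volume t₀ T :=
    fun L => ⟨L.integrable_comp hIntM.1, L.integrable_comp hIntM.2⟩
  -- key quadratic estimate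
  have key : ∀ x : Fin 3 → ℝ, c * (x ⬝ᵥ x) ≤ x ⬝ᵥ (Φ T *ᵥ x) := by
    intro x
    set L := qCLM x x with hLdef
    have hq0 : ∀ s : ℝ, 0 ≤ L ((A s)ᵀ * A s) := by
      intro s
      rw [hLdef, qCLM_apply, ← mulVec_mulVec, dotProduct_mulVec, vecMul_transpose]
      exact Finset.sum_nonneg fun i _ => mul_self_nonneg _
    set g : ℝ → ℝ := fun s => Real.exp (α * s) * L (Φ s) with hgdef
    have hg : ∀ t ∈ Ici (0:ℝ), HasDerivWithinAt g
        (α * Real.exp (α * t) * L ((A t)ᵀ * A t)) (Ici 0) t :=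
      fun t ht => deriv_aux α A Φ hdΦ L t ht
    have hgc : ContinuousOn g (Ici 0) := fun s hs => (hg s hs).continuousWithinAt
    have hg0 : g 0 = 0 := by simp [hgdef, hΦ0]
    have hmono : MonotoneOn g (Ici 0) := by
      refine monotoneOn_of_hasDerivWithinAt_nonneg (convex_Ici 0) hgc
        (fun s hs => ((hg s (interior_subset hs)).mono interior_subset)) fun s hs => ?_
      exact mul_nonneg (mul_nonneg hα.le (Real.exp_pos _).le) (hq0 s)
    have hgt₀ : 0 ≤ g t₀ := by
      rw [← hg0]
      exact hmono self_mem_Ici ht₀ ht₀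
    have hG'int : IntervalIntegrable
        (fun s => α * Real.exp (α * s) * L ((A s)ᵀ * A s)) volume t₀ T :=
      (hLgen L).continuousOn_mul
        ((continuous_const.mul (Real.continuous_exp.comp
          (continuous_const.mul continuous_id))).continuousOn)
    have hftc : (∫ s in t₀..T, α * Real.exp (α * s) * L ((A s)ᵀ * A s)) = g T - g t₀ := by
      refine intervalIntegral.integral_eq_sub_of_hasDeriv_right_of_le ht₀T (hgc.mono hIcc)
        (fun s hs => (hg s (le_trans ht₀ hs.1.le)).mono fun y hy =>
          le_of_lt (lt_of_le_of_lt (le_trans ht₀ hs.1.le) hy)) hG'int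
    have hlowint : IntervalIntegrable
        (fun s => α * Real.exp (α * t₀) * L ((A s)ᵀ * A s)) volume t₀ T :=
      (hLgen L).const_mul _
    have hmono_int : (∫ s in t₀..T, α * Real.exp (α * t₀) * L ((A s)ᵀ * A s)) ≤
        ∫ s in t₀..T, α * Real.exp (α * s) * L ((A s)ᵀ * A s) := by
      refine intervalIntegral.integral_mono_on ht₀T hlowint hG'int fun s hs => ?_
      have hee : Real.exp (α * t₀) ≤ Real.exp (α * s) :=
        Real.exp_le_exp.2 (mul_le_mul_of_nonneg_left hs.1 hα.le)
      exact mul_le_mul_of_nonneg_right (mul_le_mul_of_nonneg_left hee hα.le) (hq0 s)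
    have hval : (∫ s in t₀..T, α * Real.exp (α * t₀) * L ((A s)ᵀ * A s)) =
        α * Real.exp (α * t₀) * L (∫ s in t₀..T, (A s)ᵀ * A s) := by
      rw [intervalIntegral.integral_const_mul]; congr 1; exact L.intervalIntegral_comp_comm hIntM
    have hIEx := hIE.dotProduct_mulVec_nonneg x
    rw [star_trivial, sub_mulVec, dotProduct_sub, smul_mulVec, one_mulVec,
      dotProduct_smul, sub_nonneg, smul_eq_mul] at hIEx
    have hLI : δ * (x ⬝ᵥ x) ≤ L (∫ s in t₀..T, (A s)ᵀ * A s) := by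
      rw [hLdef, qCLM_apply]
      exact hIEx
    have h1 : α * Real.exp (α * t₀) * (δ * (x ⬝ᵥ x)) ≤ g T := by
      calc α * Real.exp (α * t₀) * (δ * (x ⬝ᵥ x))
          ≤ α * Real.exp (α * t₀) * L (∫ s in t₀..T, (A s)ᵀ * A s) :=
            mul_le_mul_of_nonneg_left hLI (by positivity)
        _ = ∫ s in t₀..T, α * Real.exp (α * t₀) * L ((A s)ᵀ * A s) := hval.symm
        _ ≤ ∫ s in t₀..T, α * Real.exp (α * s) * L ((A s)ᵀ * A s) := hmono_int
        _ = g T - g t₀ := hftc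
        _ ≤ g T := by linarith
    have hexp : Real.exp (α * T) * Real.exp (-α * t_c) = Real.exp (α * t₀) := by
      rw [← Real.exp_add]
      congr 1
      rw [hT]; ring
    have hgT : g T = Real.exp (α * T) * (x ⬝ᵥ (Φ T *ᵥ x)) := by
      rw [hgdef, hLdef]; simp
    have hepos : (0:ℝ) < Real.exp (α * T) := Real.exp_pos _
    have h2 : Real.exp (α * T) * (c * (x ⬝ᵥ x)) ≤
        Real.exp (α * T) * (x ⬝ᵥ (Φ T *ᵥ x)) := by
      calc Real.exp (α * T) * (c * (x ⬝ᵥ x))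
          = α * Real.exp (α * t₀) * (δ * (x ⬝ᵥ x)) := by rw [hc, ← hexp]; ring
        _ ≤ g T := h1
        _ = Real.exp (α * T) * (x ⬝ᵥ (Φ T *ᵥ x)) := hgT
    exact le_of_mul_le_mul_left h2 hepos
  -- symmetry of Φ T
  have hsym : ∀ i j, Φ T i j = Φ T j i := by
    intro i j
    set L := dCLM i j with hLdef
    have hzero : ∀ s : ℝ, L ((A s)ᵀ * A s) = 0 := by
      intro s
      rw [hLdef, dCLM_apply]
      simp [mul_apply, transpose_apply, mul_comm]
    have hg : ∀ t ∈ Ici (0:ℝ), HasDerivWithinAt (fun s => Real.exp (α * s) * L (Φ s))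
        (α * Real.exp (α * t) * L ((A t)ᵀ * A t)) (Ici 0) t :=
      fun t ht => deriv_aux α A Φ hdΦ L t ht
    have hconst := (convex_Ici (0:ℝ)).norm_image_sub_le_of_norm_hasDerivWithin_le
      (C := 0) hg (fun s hs => by rw [hzero]; simp) self_mem_Ici hT0
    rw [zero_mul, norm_le_zero_iff, sub_eq_zero] at hconst
    have h0 : Real.exp (α * 0) * L (Φ 0) = 0 := by simp [hΦ0]
    rw [h0] at hconst
    have hL0 : L (Φ T) = 0 := by
      rcases mul_eq_zero.1 hconst with h | h
      · exact absurd h (Real.exp_ne_zero _)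
      · exact h
    rw [hLdef, dCLM_apply, sub_eq_zero] at hL0
    exact hL0
  have hherm : (Φ T).IsHermitian := by
    rw [Matrix.IsHermitian]
    ext i j
    rw [conjTranspose_apply, star_trivial]
    exact hsym j i
  have hpsd : (Φ T - c • 1).PosSemidef := by
    refine PosSemidef.of_dotProduct_mulVec_nonneg ?_ ?_
    · exact hherm.sub (by simp [Matrix.IsHermitian])
    · intro y
      rw [star_trivial, sub_mulVec, dotProduct_sub, smul_mulVec, one_mulVec,
        dotProduct_smul, sub_nonneg, smul_eq_mul]
      exact key y
  exact ⟨hpsd, det_ge_of_sub_smul_posSemidef hc0 hpsd⟩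
end
end

section
/- Let Δ : [0,∞) → ℝ be continuous, bounded, and nonnegative, with ∫₀^{t_c} Δ(s)² ds ≥ ε > 0 for some t_c > 0, and let ω(t) = exp(−∫₀ᵗ Δ(s)² ds). Define Δ^e(t) := Δ(t) + k(1 − ω(t)) with k > 0. Then Δ^e is persistently exciting: there exist T, δ > 0 such that ∫_t^{t+T} (Δ^e(s))² ds ≥ δ for all t ≥ 0. -/
/-!
Since `Δ ≥ 0`, the energy `∫₀ᵗ Δ²` is nondecreasing, so past `t_c` it stays above `ε` and
`ω ≤ e^{-ε}`. Hence `Δᵉ ≥ k (1 - e^{-ε}) > 0` on `[t_c, ∞)`. Every window `[t, t + 2 t_c]` with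
`t ≥ 0` contains the piece `[t + t_c, t + 2 t_c]` of length `t_c` inside `[t_c, ∞)`, which gives
the uniform lower bound `(k (1 - e^{-ε}))² t_c`.
-/

open MeasureTheory

noncomputable section

namespace PersistentExcitation

open intervalIntegral

theorem mul_le_integral_of_le_on_Ici {g : ℝ → ℝ} (hg : ∀ a b, IntervalIntegrable g volume a b)
    (hg₀ : ∀ s, 0 ≤ g s) {a c : ℝ} (ha : 0 ≤ a) (hc : ∀ s, a ≤ s → c ≤ g s)
    {t : ℝ} (ht : 0 ≤ t) : c * a ≤ ∫ s in t..t + 2 * a, g s := by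
  have hhead : 0 ≤ ∫ s in t..t + a, g s :=
    integral_nonneg (by linarith) fun s _ => hg₀ s
  have htail : ∫ _ in t + a..t + 2 * a, c ≤ ∫ s in t + a..t + 2 * a, g s :=
    integral_mono_on (by linarith) intervalIntegrable_const (hg _ _)
      fun s hs => hc s (by linarith [hs.1])
  rw [intervalIntegral.integral_const, smul_eq_mul] at htail
  rw [← integral_add_adjacent_intervals (hg t (t + a)) (hg _ _)]
  linarith

theorem continuous_exp_neg_integral_sq {Δ : ℝ → ℝ} (hcont : Continuous Δ) :
    Continuous fun t => Real.exp (-∫ s in (0:ℝ)..t, Δ s ^ 2) :=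
  (continuous_primitive (fun a b => (hcont.pow 2).intervalIntegrable a b) 0).neg.rexp

end PersistentExcitation

open PersistentExcitation in
theorem stmt12_general
    (Δ : ℝ → ℝ) (hcont : Continuous Δ)
    (hnn : ∀ t, 0 ≤ Δ t)
    (t_c ε : ℝ) (htc : 0 < t_c) (hε : 0 < ε)
    (hIE : ε ≤ ∫ s in (0:ℝ)..t_c, (Δ s) ^ 2)
    (ω : ℝ → ℝ) (hω : ∀ t, ω t = Real.exp (-∫ s in (0:ℝ)..t, (Δ s) ^ 2))
    (k : ℝ) (hk : 0 < k)
    (Δe : ℝ → ℝ) (hΔe : ∀ t, Δe t = Δ t + k * (1 - ω t)) :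
    ∃ T > (0:ℝ), ∃ δ > (0:ℝ), ∀ t ≥ (0:ℝ), δ ≤ ∫ s in t..(t + T), (Δe s) ^ 2 := by
  set b := k * (1 - Real.exp (-ε))
  have hb : 0 < b := mul_pos hk (by simpa using hε)
  have hlower : ∀ s, t_c ≤ s → b ^ 2 ≤ Δe s ^ 2 := by
    intro s hs
    have hω_le : ω s ≤ Real.exp (-ε) := by
      rw [hω s]
      have hmono : ∫ u in (0:ℝ)..t_c, Δ u ^ 2 ≤ ∫ u in (0:ℝ)..s, Δ u ^ 2 :=
        intervalIntegral.integral_mono_interval le_rfl htc.le hs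
          (Filter.Eventually.of_forall fun u => sq_nonneg (Δ u))
          ((hcont.pow 2).intervalIntegrable _ _)
      exact Real.exp_le_exp.mpr (by linarith)
    have hb_le : b ≤ Δe s := by
      rw [hΔe s]
      linarith [hnn s, mul_le_mul_of_nonneg_left (sub_le_sub_left hω_le 1) hk.le]
    exact pow_le_pow_left₀ hb.le hb_le 2
  have hΔe_cont : Continuous Δe := by
    have := continuous_exp_neg_integral_sq hcont
    rw [funext hΔe, funext hω]
    fun_prop
  exact ⟨2 * t_c, by positivity, b ^ 2 * t_c, by positivity, fun t ht =>
    mul_le_integral_of_le_on_Ici (fun a c => (hΔe_cont.pow 2).intervalIntegrable a c)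
      (fun s => sq_nonneg _) htc.le hlower ht⟩

theorem stmt12
    (Δ : ℝ → ℝ) (hcont : Continuous Δ) (hbdd : ∃ M : ℝ, ∀ t, |Δ t| ≤ M)
    (hnn : ∀ t, 0 ≤ Δ t)
    (t_c ε : ℝ) (htc : 0 < t_c) (hε : 0 < ε)
    (hIE : ε ≤ ∫ s in (0:ℝ)..t_c, (Δ s) ^ 2)
    (ω : ℝ → ℝ) (hω : ∀ t, ω t = Real.exp (-∫ s in (0:ℝ)..t, (Δ s) ^ 2))
    (k : ℝ) (hk : 0 < k)
    (Δe : ℝ → ℝ) (hΔe : ∀ t, Δe t = Δ t + k * (1 - ω t)) :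
    ∃ T > (0:ℝ), ∃ δ > (0:ℝ), ∀ t ≥ (0:ℝ), δ ≤ ∫ s in t..(t + T), (Δe s) ^ 2 :=
  stmt12_general Δ hcont hnn t_c ε htc hε hIE ω hω k hk Δe hΔe
end
end
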